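/- arXiv:2509.15175 — 4 statements merged into one kernel-verified Lean document; each statement's English description precedes it below -/
import Mathlib

section
/- On ℝ⁴ with coordinates p = (x, y₁, y₂, θ), define the vector fields V₁(p) = x³·e_x, V₂(p) = x·e_{y₁}, V₃(p) = x·(e_{y₂} − y₁·e_θ), V₄(p) = e_θ, where e_x, e_{y₁}, e_{y₂}, e_θ are the standard basis vectors. Then for every p ∈ ℝ⁴ the Lie brackets satisfy: [V₁,V₂](p) = x²·V₂(p), [V₁,V₃](p) = x²·V₃(p), [V₂,V₃](p) = −x²·V₄(p), and [V₁,V₄](p) = [V₂,V₄](p) = [V₃,V₄](p) = 0. In particular, the span of V₁, V₂, V₃, V₄ over functions smooth up to x = 0 is closed under the Lie bracket. -/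
/-- The `i`-th standard basis vector of `ℝ⁴ = (Fin 4 → ℝ)`. -/
def stdBasis4 (i : Fin 4) : Fin 4 → ℝ := Pi.single i 1

/-- The Lie bracket of two vector fields on `ℝ⁴`:
`[V,W](p) = DW(p)[V(p)] − DV(p)[W(p)]`, with `D` the Fréchet derivative. -/
noncomputable def lieBracketVF (V W : (Fin 4 → ℝ) → (Fin 4 → ℝ)) : (Fin 4 → ℝ) → (Fin 4 → ℝ) :=
  fun p => fderiv ℝ W p (V p) - fderiv ℝ V p (W p)

/-- The a-structure vector field `x³ ∂ₓ`. -/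
def aVF1 : (Fin 4 → ℝ) → (Fin 4 → ℝ) := fun p => (p 0) ^ 3 • stdBasis4 0

/-- The a-structure vector field `x ∂_{y₁}`. -/
def aVF2 : (Fin 4 → ℝ) → (Fin 4 → ℝ) := fun p => (p 0) • stdBasis4 1

/-- The a-structure vector field `x (∂_{y₂} − y₁ ∂_θ)`. -/
def aVF3 : (Fin 4 → ℝ) → (Fin 4 → ℝ) :=
  fun p => (p 0) • (stdBasis4 2 - (p 1) • stdBasis4 3)

/-- The a-structure vector field `∂_θ`. -/
def aVF4 : (Fin 4 → ℝ) → (Fin 4 → ℝ) := fun _ => stdBasis4 3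


noncomputable def pr (i : Fin 4) : (Fin 4 → ℝ) →L[ℝ] ℝ := ContinuousLinearMap.proj i

lemma hpr (i : Fin 4) (p : Fin 4 → ℝ) : HasFDerivAt (fun q : Fin 4 → ℝ => q i) (pr i) p :=
  hasFDerivAt_apply i p

lemma hD1 (p : Fin 4 → ℝ) :
    HasFDerivAt aVF1 (((p 0 * p 0) • pr 0 + p 0 • (p 0 • pr 0 + p 0 • pr 0)).smulRight (stdBasis4 0)) p := by
  have : aVF1 = fun q : Fin 4 → ℝ => (q 0 * q 0 * q 0) • stdBasis4 0 := by
    funext q; simp [aVF1]; ring_nf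
  rw [this]
  exact (((hpr 0 p).mul (hpr 0 p)).mul (hpr 0 p)).smul_const (stdBasis4 0)

lemma hD2 (p : Fin 4 → ℝ) :
    HasFDerivAt aVF2 ((pr 0).smulRight (stdBasis4 1)) p :=
  (hpr 0 p).smul_const _

lemma hD3 (p : Fin 4 → ℝ) :
    HasFDerivAt aVF3 ((pr 0).smulRight (stdBasis4 2)
      - (p 0 • pr 1 + p 1 • pr 0).smulRight (stdBasis4 3)) p := by
  have : aVF3 = fun q : Fin 4 → ℝ => q 0 • stdBasis4 2 - (q 0 * q 1) • stdBasis4 3 := by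
    funext q
    simp [aVF3, smul_sub, smul_smul]
  rw [this]
  exact ((hpr 0 p).smul_const _).sub (((hpr 0 p).mul (hpr 1 p)).smul_const _)

lemma hD4 (p : Fin 4 → ℝ) : HasFDerivAt aVF4 (0 : (Fin 4 → ℝ) →L[ℝ] (Fin 4 → ℝ)) p :=
  hasFDerivAt_const _ _

/-- Lie bracket relations of the a-structure vector fields
`x³∂ₓ, x∂_{y₁}, x(∂_{y₂} − y₁∂_θ), ∂_θ` on `ℝ⁴` with coordinates `(x,y₁,y₂,θ)`. -/
theorem stmt_6 (p : Fin 4 → ℝ) :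
    lieBracketVF aVF1 aVF2 p = (p 0) ^ 2 • aVF2 p ∧
    lieBracketVF aVF1 aVF3 p = (p 0) ^ 2 • aVF3 p ∧
    lieBracketVF aVF2 aVF3 p = -((p 0) ^ 2) • aVF4 p ∧
    lieBracketVF aVF1 aVF4 p = 0 ∧
    lieBracketVF aVF2 aVF4 p = 0 ∧
    lieBracketVF aVF3 aVF4 p = 0 := by
  have h1 := (hD1 p).fderiv
  have h2 := (hD2 p).fderiv
  have h3 := (hD3 p).fderiv
  have h4 := (hD4 p).fderiv
  refine ⟨?_, ?_, ?_, ?_, ?_, ?_⟩ <;>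
  · simp only [lieBracketVF, h1, h2, h3, h4, aVF1, aVF2, aVF3, aVF4,
      ContinuousLinearMap.smulRight_apply, ContinuousLinearMap.sub_apply,
      ContinuousLinearMap.add_apply, ContinuousLinearMap.smul_apply, pr,
      ContinuousLinearMap.proj_apply, ContinuousLinearMap.zero_apply]
    funext i
    fin_cases i <;>
      simp [stdBasis4, Pi.single_apply] <;> ring
end

section
/- For t ∈ (−1,1) define c(t) = (1 + t²/2 + (t/2)·√(12 − 3t²))^{1/3} and a(t) = (1 − t²)/c(t)². Then: (i) 1 + t²/2 + (t/2)·√(12 − 3t²) > 0, so c(t) > 0; (ii) c(t)³ + (1 − t²)²/c(t)³ = 2 + t², equivalently c(t)⁶ − (2 + t²)·c(t)³ + (1 − t²)² = 0; (iii) a(t)·c(t)² + a(t)²·c(t) + c(t)³ = 3; (iv) c(t)³ − a(t)²·c(t) = t·√(12 − 3t²); and (v) setting A(t) = diag(a(t)c(t)², (a(t)²c(t)+c(t)³)/2, (a(t)²c(t)+c(t)³)/2), B(t) = diag(0, (c(t)³−a(t)²c(t))/2, (c(t)³−a(t)²c(t))/2), and λ(t) = a(t)²c(t)⁴, one has A(t)²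 − B(t)·B(t)ᵀ = λ(t)·I₃, tr A(t) = 3, and B(t)₁ⱼ = 0. Thus the relative-scaling variation of the Calabi ansatz defines a path in the parameter space 𝒫 through (I₃, 0, 1). -/
/-!
`c³` and `(1 − t²)²/c³` are the two roots `1 + t²/2 ± (t/2)√(12 − 3t²)` of
`X² − (2 + t²)X + (1 − t²)²`, whose discriminant is `t²(12 − 3t²)`; for `|t| < 1` their
sum and product are positive, so both roots are positive. Since `a c² = 1 − t²` and
`a²c = (1 − t²)²/c³`, the trace condition is Vieta's formula for the sum of the roots and
`c³ − a²c` is their difference. The matrix identity holds for all `a, c`, because the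
product of `a²c` and `c³` is `(a c²)²`.
-/

open Matrix

/-- The scaling function `c(t) = (1 + t²/2 + (t/2)√(12 − 3t²))^{1/3}` of the
relative-scaling variation of the Calabi ansatz. -/
noncomputable def calabiC (t : ℝ) : ℝ :=
  (1 + t ^ 2 / 2 + (t / 2) * Real.sqrt (12 - 3 * t ^ 2)) ^ ((1 : ℝ) / 3)

/-- The scaling function `a(t) = (1 − t²)/c(t)²`. -/
noncomputable def calabiA (t : ℝ) : ℝ := (1 - t ^ 2) / (calabiC t) ^ 2

namespace Calabi

noncomputable def rootPlus (t : ℝ) : ℝ := 1 + t ^ 2 / 2 + (t / 2) * Real.sqrt (12 - 3 * t ^ 2)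

noncomputable def rootMinus (t : ℝ) : ℝ := 1 + t ^ 2 / 2 - (t / 2) * Real.sqrt (12 - 3 * t ^ 2)

variable {t : ℝ}

theorem rootPlus_add_rootMinus (t : ℝ) : rootPlus t + rootMinus t = 2 + t ^ 2 := by
  unfold rootPlus rootMinus; ring

theorem rootPlus_sub_rootMinus (t : ℝ) :
    rootPlus t - rootMinus t = t * Real.sqrt (12 - 3 * t ^ 2) := by
  unfold rootPlus rootMinus; ring

theorem rootPlus_mul_rootMinus (ht : t ^ 2 ≤ 4) : rootPlus t * rootMinus t = (1 - t ^ 2) ^ 2 := by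
  have hsq : Real.sqrt (12 - 3 * t ^ 2) ^ 2 = 12 - 3 * t ^ 2 := Real.sq_sqrt (by linarith)
  unfold rootPlus rootMinus
  linear_combination (-t ^ 2 / 4) * hsq

theorem rootPlus_pos (ht : t ^ 2 ≤ 4) (ht1 : t ^ 2 ≠ 1) : 0 < rootPlus t := by
  have hmul : 0 < rootPlus t * rootMinus t := by
    rw [rootPlus_mul_rootMinus ht]
    exact sq_pos_of_ne_zero (sub_ne_zero.2 ht1.symm)
  rcases pos_and_pos_or_neg_and_neg_of_mul_pos hmul with h | ⟨hp, hm⟩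
  · exact h.1
  · linarith [rootPlus_add_rootMinus t, sq_nonneg t]

theorem calabiC_pow_three (h : 0 ≤ rootPlus t) : calabiC t ^ 3 = rootPlus t := by
  rw [calabiC, ← rootPlus, ← Real.rpow_natCast, ← Real.rpow_mul h]
  norm_num

theorem calabiC_pos (h : 0 < rootPlus t) : 0 < calabiC t :=
  Real.rpow_pos_of_pos h _

theorem calabiA_mul_calabiC_sq (hc : calabiC t ≠ 0) : calabiA t * calabiC t ^ 2 = 1 - t ^ 2 := by
  rw [calabiA]; field_simp

theorem calabiA_sq_mul_calabiC (hc : calabiC t ≠ 0) :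
    calabiA t ^ 2 * calabiC t = (1 - t ^ 2) ^ 2 / calabiC t ^ 3 := by
  rw [calabiA]; field_simp

theorem diagonal_mul_self_sub_mul_transpose (a c : ℝ) :
    diagonal ![a * c ^ 2, (a ^ 2 * c + c ^ 3) / 2, (a ^ 2 * c + c ^ 3) / 2] *
        diagonal ![a * c ^ 2, (a ^ 2 * c + c ^ 3) / 2, (a ^ 2 * c + c ^ 3) / 2] -
      diagonal ![0, (c ^ 3 - a ^ 2 * c) / 2, (c ^ 3 - a ^ 2 * c) / 2] *
        (diagonal ![0, (c ^ 3 - a ^ 2 * c) / 2, (c ^ 3 - a ^ 2 * c) / 2])ᵀ =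
      (a ^ 2 * c ^ 4) • (1 : Matrix (Fin 3) (Fin 3) ℝ) := by
  rw [diagonal_transpose, diagonal_mul_diagonal, diagonal_mul_diagonal, diagonal_sub,
    smul_one_eq_diagonal]
  congr 1
  funext i
  fin_cases i <;> simp <;> ring

theorem trace_diagonal_calabi (a c : ℝ) :
    (diagonal ![a * c ^ 2, (a ^ 2 * c + c ^ 3) / 2, (a ^ 2 * c + c ^ 3) / 2]).trace =
      a * c ^ 2 + a ^ 2 * c + c ^ 3 := by
  rw [trace_diagonal, Fin.sum_univ_three]
  simp only [cons_val_zero, cons_val_one, cons_val_two, head_cons, tail_cons]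
  ring

end Calabi

open Calabi in
/-- the relative-scaling variation of the Calabi ansatz defines a
path in the parameter space `𝒫` through `(I₃, 0, 1)`. -/
theorem stmt_11 (t : ℝ) (ht : t ∈ Set.Ioo (-1 : ℝ) 1) :
    (0 < 1 + t ^ 2 / 2 + (t / 2) * Real.sqrt (12 - 3 * t ^ 2)) ∧
    (0 < calabiC t) ∧
    ((calabiC t) ^ 3 + (1 - t ^ 2) ^ 2 / (calabiC t) ^ 3 = 2 + t ^ 2) ∧
    ((calabiC t) ^ 6 - (2 + t ^ 2) * (calabiC t) ^ 3 + (1 - t ^ 2) ^ 2 = 0) ∧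
    (calabiA t * (calabiC t) ^ 2 + (calabiA t) ^ 2 * calabiC t + (calabiC t) ^ 3 = 3) ∧
    ((calabiC t) ^ 3 - (calabiA t) ^ 2 * calabiC t = t * Real.sqrt (12 - 3 * t ^ 2)) ∧
    (letI A : Matrix (Fin 3) (Fin 3) ℝ := Matrix.diagonal
        ![calabiA t * (calabiC t) ^ 2,
          ((calabiA t) ^ 2 * calabiC t + (calabiC t) ^ 3) / 2,
          ((calabiA t) ^ 2 * calabiC t + (calabiC t) ^ 3) / 2]
     letI B : Matrix (Fin 3) (Fin 3) ℝ := Matrix.diagonal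
        ![0,
          ((calabiC t) ^ 3 - (calabiA t) ^ 2 * calabiC t) / 2,
          ((calabiC t) ^ 3 - (calabiA t) ^ 2 * calabiC t) / 2]
     letI lam : ℝ := (calabiA t) ^ 2 * (calabiC t) ^ 4
     A * A - B * Bᵀ = lam • (1 : Matrix (Fin 3) (Fin 3) ℝ) ∧
       A.trace = 3 ∧ ∀ j : Fin 3, B 0 j = 0) := by
  have ht1 : t ^ 2 < 1 := (sq_lt_one_iff_abs_lt_one t).2 (abs_lt.2 ht)
  have hplus := rootPlus_pos (by linarith) ht1.ne
  have hc3 := calabiC_pow_three hplus.le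
  have hc := calabiC_pos hplus
  have hprod : rootPlus t * rootMinus t = (1 - t ^ 2) ^ 2 := rootPlus_mul_rootMinus (by linarith)
  have hquot : (1 - t ^ 2) ^ 2 / calabiC t ^ 3 = rootMinus t := by
    rw [hc3, ← hprod, mul_div_cancel_left₀ _ hplus.ne']
  have ha2c : calabiA t ^ 2 * calabiC t = rootMinus t :=
    (calabiA_sq_mul_calabiC hc.ne').trans hquot
  have hsum := rootPlus_add_rootMinus t
  have hvieta : calabiA t * calabiC t ^ 2 + calabiA t ^ 2 * calabiC t + calabiC t ^ 3 = 3 := by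
    rw [calabiA_mul_calabiC_sq hc.ne', ha2c, hc3]; linarith
  refine ⟨hplus, hc, by rw [hquot, hc3, hsum], ?_, hvieta, ?_,
    diagonal_mul_self_sub_mul_transpose _ _, (trace_diagonal_calabi _ _).trans hvieta,
    fun j => by simp [diagonal]⟩
  · rw [show calabiC t ^ 6 = (calabiC t ^ 3) ^ 2 by ring, hc3]
    linear_combination rootPlus t * hsum - hprod
  · rw [ha2c, hc3, rootPlus_sub_rootMinus]
end

section
/- Let c ∈ ℝ and set D = 1 + c²/4. Define the real 3×3 matrices U = [[(1−c²/4)/D, c/D, 0],[−c/D,(1−c²/4)/D,0],[0,0,1]], A = [[1,−c,0],[c,1−c²/2,0],[0,0,1]], B = [[0,c,0],[0,c²/2,0],[0,0,0]]. Then Uᵀ·U = I₃ and det U = 1 (so U ∈ SO(3)); the product U·A is symmetric, with entries (UA)₁₁ = (1+3c²/4)/D, (UA)₂₂ = (1+c²/4+c⁴/8)/D, (UA)₃₃ = 1, (UA)₁₂ = (UA)₂₁ = −c³/(4D), and all other entries zero; and U·B has (UB)₁₂ = (c+c³/4)/D, (UB)₂₂ = (−c²/2−c⁴/8)/D, and all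 other entries zero. -/
open Matrix

set_option maxHeartbeats 1600000

/-- gauge-fixing rotation for the second family of semiflat
deformations (`ỹ₁ = y₁ + c r`): with `D = 1 + c²/4`, `U ∈ SO(3)`, `U·A` is the
stated symmetric matrix and `U·B` the stated matrix. -/
theorem stmt_16 (c D : ℝ) (hD : D = 1 + c ^ 2 / 4)
    (U A B : Matrix (Fin 3) (Fin 3) ℝ)
    (hU : U = !![(1 - c ^ 2 / 4) / D, c / D, 0;
                 -c / D, (1 - c ^ 2 / 4) / D, 0;
                 0, 0, 1])
    (hA : A = !![1, -c, 0; c, 1 - c ^ 2 / 2, 0; 0, 0, 1])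
    (hB : B = !![0, c, 0; 0, c ^ 2 / 2, 0; 0, 0, 0]) :
    Uᵀ * U = 1 ∧ U.det = 1 ∧
    U * A = !![(1 + 3 * c ^ 2 / 4) / D, -c ^ 3 / (4 * D), 0;
               -c ^ 3 / (4 * D), (1 + c ^ 2 / 4 + c ^ 4 / 8) / D, 0;
               0, 0, 1] ∧
    (U * A)ᵀ = U * A ∧
    U * B = !![0, (c + c ^ 3 / 4) / D, 0;
               0, (-c ^ 2 / 2 - c ^ 4 / 8) / D, 0;
               0, 0, 0] := by


  subst hD hU hA hB
  have hD0 : (1 + c ^ 2 / 4 : ℝ) ≠ 0 := by nlinarith [sq_nonneg c]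
  have h3 : (!![(1 - c ^ 2 / 4) / (1 + c ^ 2 / 4), c / (1 + c ^ 2 / 4), 0;
                 -c / (1 + c ^ 2 / 4), (1 - c ^ 2 / 4) / (1 + c ^ 2 / 4), 0;
                 0, 0, 1] : Matrix (Fin 3) (Fin 3) ℝ) *
      !![1, -c, 0; c, 1 - c ^ 2 / 2, 0; 0, 0, 1] =
      !![(1 + 3 * c ^ 2 / 4) / (1 + c ^ 2 / 4), -c ^ 3 / (4 * (1 + c ^ 2 / 4)), 0;
         -c ^ 3 / (4 * (1 + c ^ 2 / 4)), (1 + c ^ 2 / 4 + c ^ 4 / 8) / (1 + c ^ 2 / 4), 0;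
         0, 0, 1] := by
    ext i j
    fin_cases i <;> fin_cases j <;>
      · simp [Matrix.mul_apply, Fin.sum_univ_succ, Matrix.vecHead, Matrix.vecTail]
        try field_simp
        try ring
  refine ⟨?_, ?_, h3, ?_, ?_⟩
  · ext i j
    fin_cases i <;> fin_cases j <;>
      · simp [Matrix.mul_apply, Fin.sum_univ_succ, Matrix.vecHead, Matrix.vecTail]
        try field_simp
        try ring
  · simp [Matrix.det_fin_three]
    field_simp
    ring
  · rw [h3]
    ext i j
    fin_cases i <;> fin_cases j <;> simp
  · ext i j
    fin_cases i <;> fin_cases j <;>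
      · simp [Matrix.mul_apply, Fin.sum_univ_succ, Matrix.vecHead, Matrix.vecTail]
        try field_simp
        try ring
end

section
/- Let c ∈ ℝ and set D = 1 + c²/4. Define the real 3×3 matrices U = [[(1−c²/4)/D, 0, c/D],[0,1,0],[−c/D,0,(1−c²/4)/D]], A = [[1,0,−c],[0,1,0],[c,0,1−c²/2]], B = [[0,0,c],[0,0,0],[0,0,c²/2]]. Then Uᵀ·U = I₃ and det U = 1 (so U ∈ SO(3)); the product U·A is symmetric, with entries (UA)₁₁ = (1+3c²/4)/D, (UA)₃₃ = (1+c²/4+c⁴/8)/D, (UA)₂₂ = 1, (UA)₁₃ = (UA)₃₁ = −c³/(4D), and all other entries zero; and U·B has (UB)₁₃ = (c+c³/4)/D, (UB)₃₃ = (−c²/2−c⁴/8)/D, and all other entries zero. -/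
/-!
`U` is the rotation of the `(x₁, x₃)`-plane with `cos θ = (1 - t²)/(1 + t²)` and
`sin θ = 2t/(1 + t²)`, `t = c/2` (half-angle parametrisation), so `U ∈ SO(3)` because
`cos² θ + sin² θ = 1`. The matrices `A` and `B` respect the same splitting
`ℝ³ = ⟨e₁, e₃⟩ ⊕ ⟨e₂⟩`, so `U·A` and `U·B` are `2 × 2` products in the `(x₁, x₃)`-block,
computed entrywise.
-/

open Matrix

theorem Matrix.transpose_fin_three {α : Type*} (a₁₁ a₁₂ a₁₃ a₂₁ a₂₂ a₂₃ a₃₁ a₃₂ a₃₃ : α) :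
    !![a₁₁, a₁₂, a₁₃; a₂₁, a₂₂, a₂₃; a₃₁, a₃₂, a₃₃]ᵀ =
      !![a₁₁, a₂₁, a₃₁; a₁₂, a₂₂, a₃₂; a₁₃, a₂₃, a₃₃] := by
  ext i j
  fin_cases i <;> fin_cases j <;> rfl

section XZRotation

variable {R : Type*} [CommRing R]

def xzRotation (a b : R) : Matrix (Fin 3) (Fin 3) R :=
  !![a, 0, b; 0, 1, 0; -b, 0, a]

theorem xzRotation_mul (a b p q r s m : R) :
    xzRotation a b * !![p, 0, q; 0, m, 0; r, 0, s] =
      !![a * p + b * r, 0, a * q + b * s; 0, m, 0; a * r - b * p, 0, a * s - b * q] := by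
  rw [xzRotation, mul_fin_three]
  congr <;> ring

theorem xzRotation_transpose_mul_self {a b : R} (h : a ^ 2 + b ^ 2 = 1) :
    (xzRotation a b)ᵀ * xzRotation a b = 1 := by
  rw [xzRotation, transpose_fin_three, mul_fin_three, one_fin_three]
  congr <;> first | ring1 | linear_combination h

theorem det_xzRotation (a b : R) : (xzRotation a b).det = a ^ 2 + b ^ 2 := by
  rw [xzRotation, det_fin_three]
  simp only [of_apply, cons_val, cons_val_zero, cons_val_one]
  ring

end XZRotation

/-- gauge-fixing rotation for the third family of semiflat
deformations (`ỹ₂ = y₂ + c r`): with `D = 1 + c²/4`, `U ∈ SO(3)`, `U·A` is the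
stated symmetric matrix and `U·B` the stated matrix. -/
theorem stmt_17 (c D : ℝ) (hD : D = 1 + c ^ 2 / 4)
    (U A B : Matrix (Fin 3) (Fin 3) ℝ)
    (hU : U = !![(1 - c ^ 2 / 4) / D, 0, c / D;
                 0, 1, 0;
                 -c / D, 0, (1 - c ^ 2 / 4) / D])
    (hA : A = !![1, 0, -c; 0, 1, 0; c, 0, 1 - c ^ 2 / 2])
    (hB : B = !![0, 0, c; 0, 0, 0; 0, 0, c ^ 2 / 2]) :
    Uᵀ * U = 1 ∧ U.det = 1 ∧
    U * A = !![(1 + 3 * c ^ 2 / 4) / D, 0, -c ^ 3 / (4 * D);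
               0, 1, 0;
               -c ^ 3 / (4 * D), 0, (1 + c ^ 2 / 4 + c ^ 4 / 8) / D] ∧
    (U * A)ᵀ = U * A ∧
    U * B = !![0, 0, (c + c ^ 3 / 4) / D;
               0, 0, 0;
               0, 0, (-c ^ 2 / 2 - c ^ 4 / 8) / D] := by
  have hD0 : D ≠ 0 := by rw [hD]; positivity
  have hU' : U = xzRotation ((1 - c ^ 2 / 4) / D) (c / D) := by rw [hU, xzRotation, neg_div]
  have hunit : ((1 - c ^ 2 / 4) / D) ^ 2 + (c / D) ^ 2 = 1 := by
    field_simp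
    rw [hD]
    ring
  have hUA : U * A = !![(1 + 3 * c ^ 2 / 4) / D, 0, -c ^ 3 / (4 * D);
      0, 1, 0;
      -c ^ 3 / (4 * D), 0, (1 + c ^ 2 / 4 + c ^ 4 / 8) / D] := by
    rw [hU', hA, xzRotation_mul]
    congr <;> field_simp <;> ring
  refine ⟨?_, ?_, hUA, ?_, ?_⟩
  · rw [hU', xzRotation_transpose_mul_self hunit]
  · rw [hU', det_xzRotation, hunit]
  · rw [hUA, transpose_fin_three]
  · rw [hU', hB, xzRotation_mul]
    congr <;> field_simp <;> ring
end
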